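/- Let E be a complex Banach space, q>1 real, k≥1 an integer, and E a bounded sector at the origin. If f: E → E is holomorphic and admits the zero formal power series as its q-Gevrey asymptotic expansion of order 1/k on E, then for every subsector Ẽ ≺ E there exist C>0 and K∈ℝ such that ‖f(ε)‖ ≤ C·exp(−(k/(2 log q))·(log|ε|)²)·|ε|^K for all ε ∈ Ẽ. Conversely, this q-exponential flatness implies null q-Gevrey asymptotic expansion of order 1/k. -/

import Mathlib

/-!
With `x = log |ε|` and `c = log q / (2k)`, the `N`-th Gevrey bound is `exp` of a quadratic
polynomial in `N`, namely `(N+1) log A + c N (N+1) + (N+1) x`, while the flatness bound is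
`exp (-x² / (4c) + K x)`. Completing the square in `N` shows that, for `x` bounded above, the
minimum over `N` of the first is the second up to an additive constant: choosing for `N` the
ceiling of the real minimiser gives flatness, and the completed square being nonnegative gives
every Gevrey bound.
-/

open Complex

/-- A bounded open sector at the origin with aperture `(θ₁, θ₂)` and radius `r`. -/
def Sector (θ₁ θ₂ r : ℝ) : Set ℂ :=
  {z : ℂ | z ≠ 0 ∧ ‖z‖ < r ∧ θ₁ < Complex.arg z ∧ Complex.arg z < θ₂}

/-- `S₁ ≺ S`: `S₁` is a bounded sector at the origin whose closure minus `{0}` is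
contained in `S`. -/
def IsSubsector (S₁ S : Set ℂ) : Prop :=
  (∃ θ₁ θ₂ r : ℝ, 0 < r ∧ S₁ = Sector θ₁ θ₂ r) ∧ closure S₁ \ {0} ⊆ S

/-- `f` admits `Σ aₙ εⁿ` as its `q`-Gevrey asymptotic expansion of order `1/k` on `S`. -/
def HasQGevreyExpansion {E : Type*} [NormedAddCommGroup E] [NormedSpace ℂ E]
    (q : ℝ) (k : ℕ) (S : Set ℂ) (f : ℂ → E) (a : ℕ → E) : Prop :=
  ∀ S₁ : Set ℂ, IsSubsector S₁ S → ∃ C A : ℝ, 0 < C ∧ 0 < A ∧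
    ∀ N : ℕ, ∀ ε ∈ S₁,
      ‖f ε - ∑ n ∈ Finset.range (N + 1), ε ^ n • a n‖ ≤
        C * A ^ (N + 1) * q ^ ((N * (N + 1) : ℝ) / (2 * k)) * ‖ε‖ ^ (N + 1)

def IsQExpFlat {E : Type*} [NormedAddCommGroup E] (q : ℝ) (k : ℕ) (S : Set ℂ)
    (f : ℂ → E) : Prop :=
  ∀ S₁ : Set ℂ, IsSubsector S₁ S → ∃ C K : ℝ, 0 < C ∧
    ∀ ε ∈ S₁, ‖f ε‖ ≤
      C * Real.exp (-(k / (2 * Real.log q)) * (Real.log ‖ε‖) ^ 2) * ‖ε‖ ^ K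

lemma IsSubsector.exists_norm_lt {S₁ S : Set ℂ} (h : IsSubsector S₁ S) :
    ∃ r : ℝ, ∀ ε ∈ S₁, 0 < ‖ε‖ ∧ ‖ε‖ < r := by
  obtain ⟨⟨θ₁, θ₂, r, -, rfl⟩, -⟩ := h
  exact ⟨r, fun ε hε => ⟨norm_pos_iff.mpr hε.1, hε.2.1⟩⟩

lemma Nat.ceil_sub_le_max (t : ℝ) : (⌈t⌉₊ : ℝ) - t ≤ max 1 (-t) := by
  rcases le_or_gt t 0 with ht | ht
  · simp [Nat.ceil_eq_zero.mpr ht]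
  · linarith [Nat.ceil_lt_add_one ht.le, le_max_left 1 (-t)]

section Exponents

variable {c : ℝ}

lemma gevrey_exponent_eq (hc : c ≠ 0) (a x n : ℝ) :
    (n + 1) * a + c * (n * (n + 1)) + (n + 1) * x =
      c * (n + (a + c + x) / (2 * c)) ^ 2 + (a - (a + c) ^ 2 / (4 * c)) +
        (-x ^ 2 / (4 * c) + (1 / 2 - a / (2 * c)) * x) := by
  field_simp
  ring

lemma exists_gevrey_exponent_le (hc : 0 < c) (a R : ℝ) :
    ∃ B : ℝ, ∀ x ≤ R, ∃ N : ℕ,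
      (N + 1) * a + c * (N * (N + 1)) + (N + 1) * x ≤
        B + (-x ^ 2 / (4 * c) + (1 / 2 - a / (2 * c)) * x) := by
  set M := max 1 ((a + c + R) / (2 * c))
  refine ⟨c * M ^ 2 + (a - (a + c) ^ 2 / (4 * c)), fun x hx => ?_⟩
  set s := (a + c + x) / (2 * c)
  refine ⟨⌈-s⌉₊, ?_⟩
  have hdist : (⌈-s⌉₊ : ℝ) + s ≤ M := by
    have hceil := Nat.ceil_sub_le_max (-s)
    rw [sub_neg_eq_add, neg_neg] at hceil
    exact hceil.trans
      (max_le_max le_rfl (div_le_div_of_nonneg_right (by linarith) (by positivity)))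
  have hsq : ((⌈-s⌉₊ : ℝ) + s) ^ 2 ≤ M ^ 2 :=
    pow_le_pow_left₀ (by linarith [Nat.le_ceil (-s)]) hdist 2
  rw [gevrey_exponent_eq hc.ne']
  gcongr

lemma flat_exponent_le_gevrey_exponent (hc : 0 < c) (K x n : ℝ) :
    -x ^ 2 / (4 * c) + K * x ≤
      c * K ^ 2 + ((n + 1) * (c * (1 - 2 * K)) + c * (n * (n + 1)) + (n + 1) * x) := by
  have hsquare : c * K ^ 2 + ((n + 1) * (c * (1 - 2 * K)) + c * (n * (n + 1)) + (n + 1) * x)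
      - (-x ^ 2 / (4 * c) + K * x) = (x + 2 * c * (n + 1 - K)) ^ 2 / (4 * c) := by
    field_simp
    ring
  linarith [show 0 ≤ (x + 2 * c * (n + 1 - K)) ^ 2 / (4 * c) by positivity]

end Exponents

lemma gevrey_bound_eq_exp {q A ρ : ℝ} (hq : 0 < q) (hA : 0 < A) (hρ : 0 < ρ) (k N : ℕ)
    (C : ℝ) :
    C * A ^ (N + 1) * q ^ ((N * (N + 1) : ℝ) / (2 * k)) * ρ ^ (N + 1) =
      C * Real.exp ((N + 1) * Real.log A + Real.log q / (2 * k) * (N * (N + 1)) +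
        (N + 1) * Real.log ρ) := by
  have hpow : ∀ {y : ℝ}, 0 < y → y ^ (N + 1) = Real.exp ((N + 1) * Real.log y) := fun hy => by
    rw [← Real.exp_log hy, ← Real.exp_nat_mul, Real.log_exp]
    push_cast
    ring_nf
  rw [hpow hA, hpow hρ, Real.rpow_def_of_pos hq, Real.exp_add, Real.exp_add]
  ring_nf

lemma flat_bound_eq_exp {q ρ : ℝ} (hρ : 0 < ρ) (k : ℕ) (C K : ℝ) :
    C * Real.exp (-(k / (2 * Real.log q)) * (Real.log ρ) ^ 2) * ρ ^ K =
      C * Real.exp (-(Real.log ρ) ^ 2 / (4 * (Real.log q / (2 * k))) + K * Real.log ρ) := by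
  rw [Real.rpow_def_of_pos hρ, mul_assoc, ← Real.exp_add]
  simp only [div_eq_mul_inv, mul_inv, inv_inv]
  ring_nf

theorem isQExpFlat_of_hasQGevreyExpansion_zero {E : Type*} [NormedAddCommGroup E]
    [NormedSpace ℂ E] {q : ℝ} (hq : 1 < q) {k : ℕ} (hk : 0 < k) {S : Set ℂ} {f : ℂ → E}
    (h : HasQGevreyExpansion q k S f fun _ => 0) : IsQExpFlat q k S f := by
  intro S₁ hS₁
  obtain ⟨r, hr⟩ := hS₁.exists_norm_lt
  obtain ⟨C, A, hC, hA, hf⟩ := h S₁ hS₁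
  set c := Real.log q / (2 * k)
  have hc : 0 < c := by have := Real.log_pos hq; positivity
  obtain ⟨B, hB⟩ := exists_gevrey_exponent_le hc (Real.log A) (Real.log r)
  refine ⟨C * Real.exp B, 1 / 2 - Real.log A / (2 * c), by positivity, fun ε hε => ?_⟩
  obtain ⟨hρ, hρr⟩ := hr ε hε
  obtain ⟨N, hN⟩ := hB (Real.log ‖ε‖) (Real.log_lt_log hρ hρr).le
  calc ‖f ε‖
    _ ≤ C * A ^ (N + 1) * q ^ ((N * (N + 1) : ℝ) / (2 * k)) * ‖ε‖ ^ (N + 1) := by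
        simpa using hf N ε hε
    _ = C * Real.exp ((N + 1) * Real.log A + c * (N * (N + 1)) + (N + 1) * Real.log ‖ε‖) :=
        gevrey_bound_eq_exp (zero_lt_one.trans hq) hA hρ k N C
    _ ≤ C * Real.exp B * Real.exp (-(Real.log ‖ε‖) ^ 2 / (4 * c) +
          (1 / 2 - Real.log A / (2 * c)) * Real.log ‖ε‖) := by
        rw [mul_assoc, ← Real.exp_add]
        gcongr
    _ = _ := by rw [mul_assoc C, flat_bound_eq_exp hρ, mul_assoc]

theorem hasQGevreyExpansion_zero_of_isQExpFlat {E : Type*} [NormedAddCommGroup E]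
    [NormedSpace ℂ E] {q : ℝ} (hq : 1 < q) {k : ℕ} (hk : 0 < k) {S : Set ℂ} {f : ℂ → E}
    (h : IsQExpFlat q k S f) : HasQGevreyExpansion q k S f fun _ => 0 := by
  intro S₁ hS₁
  obtain ⟨r, hr⟩ := hS₁.exists_norm_lt
  obtain ⟨C, K, hC, hf⟩ := h S₁ hS₁
  set c := Real.log q / (2 * k)
  have hc : 0 < c := by have := Real.log_pos hq; positivity
  refine ⟨C * Real.exp (c * K ^ 2), Real.exp (c * (1 - 2 * K)), by positivity, Real.exp_pos _,
    fun N ε hε => ?_⟩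
  have hρ := (hr ε hε).1
  simp only [smul_zero, Finset.sum_const_zero, sub_zero]
  calc ‖f ε‖
    _ ≤ C * Real.exp (-(k / (2 * Real.log q)) * (Real.log ‖ε‖) ^ 2) * ‖ε‖ ^ K :=
        hf ε hε
    _ = C * Real.exp (-(Real.log ‖ε‖) ^ 2 / (4 * c) + K * Real.log ‖ε‖) :=
        flat_bound_eq_exp hρ k C K
    _ ≤ C * Real.exp (c * K ^ 2) * Real.exp ((N + 1) * Real.log (Real.exp (c * (1 - 2 * K))) +
          c * (N * (N + 1)) + (N + 1) * Real.log ‖ε‖) := by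
        rw [mul_assoc, ← Real.exp_add, Real.log_exp]
        gcongr C * Real.exp ?_
        exact flat_exponent_le_gevrey_exponent hc K _ _
    _ = _ := (gevrey_bound_eq_exp (zero_lt_one.trans hq) (Real.exp_pos _) hρ k N _).symm

theorem qGevrey_null_iff_flat_general {E : Type*} [NormedAddCommGroup E] [NormedSpace ℂ E]
    (q : ℝ) (hq : 1 < q) (k : ℕ) (hk : 1 ≤ k)
    (S : Set ℂ) (f : ℂ → E) :
    HasQGevreyExpansion q k S f (fun _ => 0) ↔
      ∀ S₁ : Set ℂ, IsSubsector S₁ S → ∃ C K : ℝ, 0 < C ∧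
        ∀ ε ∈ S₁, ‖f ε‖ ≤
          C * Real.exp (-(k / (2 * Real.log q)) * (Real.log (‖ε‖)) ^ 2) *
            ‖ε‖ ^ K :=
  ⟨isQExpFlat_of_hasQGevreyExpansion_zero hq hk, hasQGevreyExpansion_zero_of_isQExpFlat hq hk⟩

/-- a holomorphic function on a bounded sector has the zero series as its
`q`-Gevrey asymptotic expansion of order `1/k` if and only if it is `q`-exponentially
flat of order `k` on every subsector. -/
theorem qGevrey_null_iff_flat {E : Type*} [NormedAddCommGroup E] [NormedSpace ℂ E]
    [CompleteSpace E] (q : ℝ) (hq : 1 < q) (k : ℕ) (hk : 1 ≤ k)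
    (S : Set ℂ) (hS : ∃ θ₁ θ₂ r : ℝ, 0 < r ∧ S = Sector θ₁ θ₂ r)
    (f : ℂ → E) (hf : DifferentiableOn ℂ f S) :
    HasQGevreyExpansion q k S f (fun _ => 0) ↔
      ∀ S₁ : Set ℂ, IsSubsector S₁ S → ∃ C K : ℝ, 0 < C ∧
        ∀ ε ∈ S₁, ‖f ε‖ ≤
          C * Real.exp (-(k / (2 * Real.log q)) * (Real.log (‖ε‖)) ^ 2) *
            ‖ε‖ ^ K :=
  qGevrey_null_iff_flat_general q hq k hk S f
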